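/- arXiv:1308.3890 — 3 statements merged into one kernel-verified Lean document; each statement's English description precedes it below -/
import Mathlib

section
/- Let $c_n \in (0,1)$ and let $F_{c_n}$ be the Marčenko–Pastur distribution with ratio index $c_n$ and scale $1$, whose density on $[a(c_n), b(c_n)]$ with $a(c_n)=(1-\sqrt{c_n})^2$, $b(c_n)=(1+\sqrt{c_n})^2$ is $p(x) = \frac{1}{2\pi x c_n}\sqrt{(b(c_n)-x)(x-a(c_n))}$. Then $\int \log(x)\, dF_{c_n}(x) = \frac{c_n-1}{c_n}\log(1-c_n) - 1$. -/
open Real Set intervalIntegral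
open MeasureTheory (volume ae_of_all)

/-! Substituting `x = 1 + c - 2√c cos θ` turns the integral into
`(2/π) ∫₀^π log D · sin²θ / D dθ` with `D = 1 - 2√c cos θ + c = |1 - √c e^{iθ}|²`.
Now `sin²θ / D` is an affine function of `cos θ` plus a multiple of
`(1 - √c cos θ) / D = Re (1 - √c e^{iθ})⁻¹ = ∑ c^{k/2} cos kθ`, and the real part of the
logarithmic series gives `log D = -2 ∑ c^{k/2} cos kθ / k`, whence
`∫₀^π log D cos kθ dθ = -π c^{k/2} / k`. Integrating termwise leaves
`∑ c^k / k = -log (1 - c)`. -/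

theorem normSq_one_sub_ofReal_mul_exp (r θ : ℝ) :
    Complex.normSq (1 - r * Complex.exp (θ * Complex.I)) = 1 - 2 * r * cos θ + r ^ 2 := by
  rw [Complex.exp_mul_I, ← Complex.ofReal_cos, ← Complex.ofReal_sin]
  simp only [Complex.normSq_apply, Complex.sub_re, Complex.sub_im, Complex.mul_re,
    Complex.mul_im, Complex.add_re, Complex.add_im, Complex.ofReal_re, Complex.ofReal_im,
    Complex.I_re, Complex.I_im, Complex.one_re, Complex.one_im]
  linear_combination r ^ 2 * sin_sq_add_cos_sq θ

theorem ofReal_mul_exp_mul_I_pow (r θ : ℝ) (n : ℕ) :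
    ((r : ℂ) * Complex.exp (θ * Complex.I)) ^ n =
      ((r ^ n : ℝ) : ℂ) * Complex.exp ((n * θ : ℝ) * Complex.I) := by
  rw [mul_pow, ← Complex.exp_nat_mul]
  push_cast
  ring_nf

theorem norm_ofReal_mul_exp_mul_I (r θ : ℝ) :
    ‖(r : ℂ) * Complex.exp (θ * Complex.I)‖ = |r| := by
  simp [Complex.norm_exp_ofReal_mul_I]

theorem one_sub_abs_sq_le_one_sub_two_mul_cos_add_sq (r θ : ℝ) :
    (1 - |r|) ^ 2 ≤ 1 - 2 * r * cos θ + r ^ 2 := by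
  have h : r * cos θ ≤ |r| := calc
    r * cos θ ≤ |r * cos θ| := le_abs_self _
    _ = |r| * |cos θ| := abs_mul r (cos θ)
    _ ≤ |r| := mul_le_of_le_one_right (abs_nonneg r) (abs_cos_le_one θ)
  nlinarith [sq_abs r]

theorem one_sub_two_mul_cos_add_sq_pos {r : ℝ} (hr : |r| < 1) (θ : ℝ) :
    0 < 1 - 2 * r * cos θ + r ^ 2 :=
  lt_of_lt_of_le (by nlinarith) (one_sub_abs_sq_le_one_sub_two_mul_cos_add_sq r θ)

theorem hasSum_pow_mul_cos {r : ℝ} (hr : |r| < 1) (θ : ℝ) :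
    HasSum (fun n : ℕ => r ^ n * cos (n * θ))
      ((1 - r * cos θ) / (1 - 2 * r * cos θ + r ^ 2)) := by
  have h := Complex.hasSum_re (hasSum_geometric_of_norm_lt_one
    ((norm_ofReal_mul_exp_mul_I r θ).trans_lt hr))
  simp only [ofReal_mul_exp_mul_I_pow, Complex.re_ofReal_mul, Complex.exp_ofReal_mul_I_re] at h
  rwa [Complex.inv_re, normSq_one_sub_ofReal_mul_exp, Complex.sub_re, Complex.one_re,
    Complex.re_ofReal_mul, Complex.exp_ofReal_mul_I_re] at h

theorem hasSum_log_one_sub_two_mul_cos_add_sq {r : ℝ} (hr : |r| < 1) (θ : ℝ) :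
    HasSum (fun n : ℕ => -2 * (r ^ n * cos (n * θ) / n)) (log (1 - 2 * r * cos θ + r ^ 2)) := by
  have h := (Complex.hasSum_re (Complex.hasSum_taylorSeries_neg_log
    ((norm_ofReal_mul_exp_mul_I r θ).trans_lt hr))).mul_left (-2)
  simp only [ofReal_mul_exp_mul_I_pow, Complex.div_natCast_re, Complex.re_ofReal_mul,
    Complex.exp_ofReal_mul_I_re] at h
  rw [Complex.neg_re, Complex.log_re, Complex.norm_def, log_sqrt (Complex.normSq_nonneg _),
    normSq_one_sub_ofReal_mul_exp] at h
  rwa [mul_neg, neg_mul, neg_neg, mul_div_cancel₀ _ two_ne_zero] at h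

theorem integral_cos_int_mul_zero_pi {m : ℤ} (hm : m ≠ 0) :
    ∫ x in (0 : ℝ)..π, cos (m * x) = 0 := by
  rw [integral_comp_mul_left (fun x => cos x) (Int.cast_ne_zero.2 hm), integral_cos]
  simp [sin_int_mul_pi]

theorem integral_cos_nat_mul_mul_cos_nat_mul {j : ℕ} (hj : j ≠ 0) (k : ℕ) :
    ∫ x in (0 : ℝ)..π, cos (j * x) * cos (k * x) = if j = k then π / 2 else 0 := by
  have h_prod (x : ℝ) : cos (j * x) * cos (k * x) =
      (cos (((j - k : ℤ) : ℝ) * x) + cos (((j + k : ℤ) : ℝ) * x)) / 2 := by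
    push_cast
    rw [sub_mul, add_mul, ← two_mul_cos_mul_cos]
    ring
  have h_add : (j + k : ℤ) ≠ 0 := by omega
  simp_rw [h_prod]
  rw [integral_div, integral_add (Continuous.intervalIntegrable (by fun_prop) _ _)
    (Continuous.intervalIntegrable (by fun_prop) _ _), integral_cos_int_mul_zero_pi h_add]
  split_ifs with hjk
  · simp [hjk]
  · rw [integral_cos_int_mul_zero_pi (by omega)]
    simp

theorem hasSum_intervalIntegral_of_norm_le_geometric {E : Type*} [NormedAddCommGroup E]
    [NormedSpace ℝ E] {F : ℕ → ℝ → E} {G : ℝ → E} {a b C ρ : ℝ}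
    (hF : ∀ n, IntervalIntegrable (F n) volume a b) (hρ₀ : 0 ≤ ρ) (hρ₁ : ρ < 1)
    (h_bound : ∀ n, ∀ t ∈ uIcc a b, ‖F n t‖ ≤ C * ρ ^ n)
    (h_lim : ∀ t ∈ uIcc a b, HasSum (fun n => F n t) (G t)) :
    HasSum (fun n => ∫ t in a..b, F n t) (∫ t in a..b, G t) := by
  refine hasSum_integral_of_dominated_convergence (fun n _ => C * ρ ^ n)
    (fun n => (hF n).def'.aestronglyMeasurable) ?_ ?_ intervalIntegrable_const ?_
  · exact fun n => ae_of_all _ fun t ht => h_bound n t (uIoc_subset_uIcc ht)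
  · exact ae_of_all _ fun _ _ => (summable_geometric_of_lt_one hρ₀ hρ₁).mul_left C
  · exact ae_of_all _ fun t ht => h_lim t (uIoc_subset_uIcc ht)

theorem norm_neg_two_mul_pow_mul_cos_div_mul_cos_le (r θ : ℝ) (j k : ℕ) :
    ‖-2 * (r ^ j * cos (j * θ) / j) * cos (k * θ)‖ ≤ 2 * |r| ^ j := by
  simp only [norm_mul, norm_div, norm_neg, norm_pow, Real.norm_eq_abs, abs_two, Nat.abs_cast]
  rcases j.eq_zero_or_pos with rfl | hj
  · simp
  have hj : (1 : ℝ) ≤ j := by exact_mod_cast hj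
  calc 2 * (|r| ^ j * |cos (j * θ)| / j) * |cos (k * θ)|
      ≤ 2 * (|r| ^ j * 1 / 1) * 1 := by gcongr <;> exact abs_cos_le_one _
    _ = 2 * |r| ^ j := by ring

/-- For `k = 0` the right-hand side is `0` through the convention `x / 0 = 0`. -/
theorem integral_log_one_sub_two_mul_cos_add_sq_mul_cos {r : ℝ} (hr : |r| < 1) (k : ℕ) :
    ∫ θ in (0 : ℝ)..π, log (1 - 2 * r * cos θ + r ^ 2) * cos (k * θ) =
      -(π * r ^ k / k) := by
  have h_sum := hasSum_intervalIntegral_of_norm_le_geometric (a := 0) (b := π)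
    (F := fun j θ => -2 * (r ^ j * cos (j * θ) / j) * cos (k * θ))
    (fun j => Continuous.intervalIntegrable (by fun_prop) _ _) (abs_nonneg r) hr
    (fun j θ _ => norm_neg_two_mul_pow_mul_cos_div_mul_cos_le r θ j k)
    (fun θ _ => (hasSum_log_one_sub_two_mul_cos_add_sq hr θ).mul_right _)
  have h_term (j : ℕ) : ∫ θ in (0 : ℝ)..π, -2 * (r ^ j * cos (j * θ) / j) * cos (k * θ) =
      if j = k then -(π * r ^ k / k) else 0 := by
    rcases eq_or_ne j 0 with rfl | hj
    · split_ifs with h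
      · subst h; simp
      · simp
    have h_factor (θ : ℝ) : -2 * (r ^ j * cos (j * θ) / j) * cos (k * θ) =
        -2 * r ^ j / j * (cos (j * θ) * cos (k * θ)) := by ring
    simp_rw [h_factor, integral_const_mul, integral_cos_nat_mul_mul_cos_nat_mul hj]
    split_ifs with h
    · subst h; ring
    · simp
  simp_rw [h_term] at h_sum
  exact h_sum.unique (hasSum_ite_eq k _)

theorem hasSum_pow_div_natCast {x : ℝ} (hx : |x| < 1) :
    HasSum (fun n : ℕ => x ^ n / n) (-log (1 - x)) := by
  refine (hasSum_nat_add_iff' 1).mp ?_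
  simpa using Real.hasSum_pow_div_log_of_abs_lt_one hx

theorem integral_log_one_sub_two_mul_cos_add_sq_mul_one_sub_mul_cos_div {r : ℝ} (hr : |r| < 1) :
    ∫ θ in (0 : ℝ)..π, log (1 - 2 * r * cos θ + r ^ 2) *
      ((1 - r * cos θ) / (1 - 2 * r * cos θ + r ^ 2)) = π * log (1 - r ^ 2) := by
  have h_cont : Continuous fun θ => log (1 - 2 * r * cos θ + r ^ 2) := by
    fun_prop (disch := exact fun θ => (one_sub_two_mul_cos_add_sq_pos hr θ).ne')
  obtain ⟨M, hM⟩ := (isCompact_uIcc (a := 0) (b := π)).exists_bound_of_continuousOn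
    h_cont.continuousOn
  have h_bound (k : ℕ) : ∀ θ ∈ uIcc 0 π,
      ‖log (1 - 2 * r * cos θ + r ^ 2) * (r ^ k * cos (k * θ))‖ ≤ M * |r| ^ k := by
    intro θ hθ
    rw [norm_mul, norm_mul, norm_pow, Real.norm_eq_abs r]
    have hM_nonneg : 0 ≤ M := (norm_nonneg _).trans (hM θ hθ)
    gcongr
    · exact hM θ hθ
    · exact mul_le_of_le_one_right (by positivity) (abs_cos_le_one _)
  have h_sum := hasSum_intervalIntegral_of_norm_le_geometric
    (fun k => Continuous.intervalIntegrable (by fun_prop) _ _) (abs_nonneg r) hr h_bound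
    (fun θ _ => (hasSum_pow_mul_cos hr θ).mul_left _)
  have h_term (k : ℕ) : ∫ θ in (0 : ℝ)..π,
      log (1 - 2 * r * cos θ + r ^ 2) * (r ^ k * cos (k * θ)) = -π * ((r ^ 2) ^ k / k) := by
    simp_rw [mul_left_comm _ (r ^ k), integral_const_mul,
      integral_log_one_sub_two_mul_cos_add_sq_mul_cos hr]
    ring
  have hr2 : |r ^ 2| < 1 := by rwa [abs_pow, sq_lt_one_iff_abs_lt_one, abs_abs]
  simp_rw [h_term] at h_sum
  rw [h_sum.unique ((hasSum_pow_div_natCast hr2).mul_left (-π))]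
  ring

theorem sin_sq_div_one_sub_two_mul_cos_add_sq {r : ℝ} (hr : |r| < 1) (hr₀ : r ≠ 0)
    (θ : ℝ) :
    sin θ ^ 2 / (1 - 2 * r * cos θ + r ^ 2) =
      (1 + r * cos θ - (1 - r ^ 2) * ((1 - r * cos θ) / (1 - 2 * r * cos θ + r ^ 2))) /
        (2 * r ^ 2) := by
  have hD := (one_sub_two_mul_cos_add_sq_pos hr θ).ne'
  field_simp
  linear_combination 2 * r ^ 2 * sin_sq_add_cos_sq θ

theorem integral_log_one_sub_two_mul_cos_add_sq_mul_sin_sq_div {r : ℝ} (hr : |r| < 1)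
    (hr₀ : r ≠ 0) :
    ∫ θ in (0 : ℝ)..π,
        log (1 - 2 * r * cos θ + r ^ 2) * (sin θ ^ 2 / (1 - 2 * r * cos θ + r ^ 2)) =
      -(π / 2) * (1 + (1 - r ^ 2) / r ^ 2 * log (1 - r ^ 2)) := by
  have hD_ne (θ : ℝ) : 1 - 2 * r * cos θ + r ^ 2 ≠ 0 :=
    (one_sub_two_mul_cos_add_sq_pos hr θ).ne'
  have hC₀ := integral_log_one_sub_two_mul_cos_add_sq_mul_cos hr 0
  have hC₁ := integral_log_one_sub_two_mul_cos_add_sq_mul_cos hr 1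
  simp only [Nat.cast_zero, Nat.cast_one, zero_mul, one_mul, cos_zero, mul_one, pow_zero,
    pow_one, div_zero, neg_zero] at hC₀ hC₁
  have hP := integral_log_one_sub_two_mul_cos_add_sq_mul_one_sub_mul_cos_div hr
  have h_split (θ : ℝ) :
      log (1 - 2 * r * cos θ + r ^ 2) * (sin θ ^ 2 / (1 - 2 * r * cos θ + r ^ 2)) =
        (log (1 - 2 * r * cos θ + r ^ 2) + r * (log (1 - 2 * r * cos θ + r ^ 2) * cos θ) -
          (1 - r ^ 2) * (log (1 - 2 * r * cos θ + r ^ 2) *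
            ((1 - r * cos θ) / (1 - 2 * r * cos θ + r ^ 2)))) / (2 * r ^ 2) := by
    rw [sin_sq_div_one_sub_two_mul_cos_add_sq hr hr₀]
    ring
  simp_rw [h_split]
  rw [integral_div, integral_sub, integral_add, integral_const_mul, integral_const_mul,
    hC₀, hC₁, hP]
  · field_simp
    ring
  all_goals exact Continuous.intervalIntegrable (by fun_prop (disch := exact hD_ne)) _ _

theorem integral_mul_sqrt_sub_mul_sub {a b : ℝ} (hab : a ≤ b) {h : ℝ → ℝ}
    (hh : ContinuousOn h (Icc a b)) :
    ∫ x in a..b, h x * √((b - x) * (x - a)) =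
      ((b - a) / 2) ^ 2 *
        ∫ θ in (0 : ℝ)..π, h ((a + b) / 2 - (b - a) / 2 * cos θ) * sin θ ^ 2 := by
  set f := fun θ => (a + b) / 2 - (b - a) / 2 * cos θ with hf
  have hf_deriv (θ : ℝ) : HasDerivAt f ((b - a) / 2 * sin θ) θ := by
    simpa using ((hasDerivAt_cos θ).const_mul ((b - a) / 2)).const_sub ((a + b) / 2)
  have hf_mem (θ : ℝ) : f θ ∈ Icc a b := by
    simp only [hf, mem_Icc]
    constructor <;> nlinarith [neg_one_le_cos θ, cos_le_one θ]
  have hg : ContinuousOn (fun x => h x * √((b - x) * (x - a))) (f '' uIcc 0 π) :=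
    (hh.mul (by fun_prop)).mono (image_subset_iff.2 fun θ _ => hf_mem θ)
  have h_subst := integral_comp_mul_deriv' (fun θ _ => hf_deriv θ) (by fun_prop) hg
  have hf₀ : f 0 = a := by simp only [hf, cos_zero]; ring
  have hf_pi : f π = b := by simp only [hf, cos_pi]; ring
  rw [hf₀, hf_pi] at h_subst
  rw [← h_subst, ← integral_const_mul]
  refine integral_congr fun θ hθ => ?_
  have h_sin : 0 ≤ sin θ := by
    rw [uIcc_of_le pi_pos.le] at hθ
    exact sin_nonneg_of_nonneg_of_le_pi hθ.1 hθ.2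
  have h_sqrt : √((b - f θ) * (f θ - a)) = (b - a) / 2 * sin θ := by
    rw [← sqrt_sq (by nlinarith : 0 ≤ (b - a) / 2 * sin θ)]
    congr 1
    simp only [hf]
    linear_combination (-(b - a) ^ 2 / 4) * sin_sq_add_cos_sq θ
  simp only [Function.comp_apply, h_sqrt]
  ring

theorem mp_log_integral (c : ℝ) (hc : c ∈ Set.Ioo (0:ℝ) 1) :
    let a := (1 - Real.sqrt c)^2
    let b := (1 + Real.sqrt c)^2
    ∫ x in a..b,
        Real.log x * (1 / (2 * Real.pi * x * c) * Real.sqrt ((b - x) * (x - a)))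
      = (c - 1) / c * Real.log (1 - c) - 1 := by
  obtain ⟨hc₀, hc₁⟩ := hc
  intro a b
  set r := √c
  have hc : c = r ^ 2 := (sq_sqrt hc₀.le).symm
  have hr₀ : 0 < r := sqrt_pos.2 hc₀
  have hr₁ : r < 1 := by rw [← sqrt_one]; exact sqrt_lt_sqrt hc₀.le hc₁
  have hr : |r| < 1 := by rwa [abs_of_pos hr₀]
  have ha : 0 < a := pow_pos (sub_pos.2 hr₁) 2
  have hab : a ≤ b := by simp only [a, b]; nlinarith
  have h_density (x : ℝ) : log x * (1 / (2 * π * x * c) * √((b - x) * (x - a))) =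
      log x / (2 * π * c * x) * √((b - x) * (x - a)) := by ring
  have h_cont : ContinuousOn (fun x => log x / (2 * π * c * x)) (Icc a b) := by
    refine ContinuousOn.div (continuousOn_log.mono fun x hx => (ha.trans_le hx.1).ne')
      (by fun_prop) fun x hx => ?_
    have := ha.trans_le hx.1
    positivity
  have h_mid : (a + b) / 2 = 1 + r ^ 2 := by simp only [a, b]; ring
  have h_half : (b - a) / 2 = 2 * r := by simp only [a, b]; ring
  have h_weight (θ : ℝ) :
      log (1 + r ^ 2 - 2 * r * cos θ) / (2 * π * c * (1 + r ^ 2 - 2 * r * cos θ)) * sin θ ^ 2 =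
        1 / (2 * π * c) *
        (log (1 - 2 * r * cos θ + r ^ 2) * (sin θ ^ 2 / (1 - 2 * r * cos θ + r ^ 2))) := by
    have hD := (one_sub_two_mul_cos_add_sq_pos hr θ).ne'
    rw [show 1 + r ^ 2 - 2 * r * cos θ = 1 - 2 * r * cos θ + r ^ 2 by ring]
    field_simp
  simp_rw [h_density, integral_mul_sqrt_sub_mul_sub hab h_cont, h_mid, h_half, h_weight,
    integral_const_mul, integral_log_one_sub_two_mul_cos_add_sq_mul_sin_sq_div hr hr₀.ne']
  rw [hc]
  field_simp
  ring
end

section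
/- Let $c \in (0,1)$, $\sigma^2 > 0$, $a(c)=\sigma^2(1-\sqrt{c})^2$, $b(c)=\sigma^2(1+\sqrt{c})^2$. Then for $g(x)=\log x$ and $\sigma^2=1$, the quantity $m(g) = \frac{g(a(c))+g(b(c))}{4} - \frac{1}{2\pi}\int_{a(c)}^{b(c)} \frac{g(x)}{\sqrt{4c - (x-1-c)^2}}\, dx$ equals $\frac{1}{2}\log(1-c)$. -/
/-!
The substitution `x = 1 + c - 2√c cos θ` maps `[0, π]` onto `[a(c), b(c)]` and turns the
arcsine-type weight `dx / √(4c - (x - 1 - c)²)` into `dθ`. Since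
`1 + r² - 2r cos θ = |e^{iθ} - r|²`, the resulting integral of `log` is twice a circle average of
`log |z - r|`, which equals `log⁺ |r|` and so vanishes for `r = √c < 1`. Only the boundary term
remains, and `a(c) b(c) = (1 - c)²`.
-/

open Real Set MeasureTheory

theorem norm_exp_ofReal_mul_I_sub_ofReal_sq (r θ : ℝ) :
    ‖Complex.exp (θ * Complex.I) - r‖ ^ 2 = 1 + r ^ 2 - 2 * r * cos θ := by
  rw [Complex.sq_norm, Complex.normSq_apply]
  simp [Complex.exp_ofReal_mul_I_re, Complex.exp_ofReal_mul_I_im]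
  nlinarith [sin_sq_add_cos_sq θ]

theorem log_one_add_sq_sub_two_mul_cos (r θ : ℝ) :
    log (1 + r ^ 2 - 2 * r * cos θ) = 2 * log ‖circleMap 0 1 θ - r‖ := by
  rw [← norm_exp_ofReal_mul_I_sub_ofReal_sq, log_pow, circleMap_zero, Complex.ofReal_one, one_mul]
  norm_num

theorem integral_log_one_add_sq_sub_two_mul_cos_zero_two_pi (r : ℝ) :
    ∫ θ in 0..2 * π, log (1 + r ^ 2 - 2 * r * cos θ) = 4 * π * log⁺ |r| := by
  have h := circleAverage_log_norm_sub_const_eq_posLog (a := (r : ℂ))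
  rw [circleAverage_def, smul_eq_mul, Complex.norm_real, norm_eq_abs] at h
  simp_rw [log_one_add_sq_sub_two_mul_cos]
  rw [intervalIntegral.integral_const_mul]
  field_simp at h
  linarith

theorem integral_log_one_add_sq_sub_two_mul_cos_zero_pi (r : ℝ) :
    ∫ θ in 0..π, log (1 + r ^ 2 - 2 * r * cos θ) = 2 * π * log⁺ |r| := by
  set g : ℝ → ℝ := fun θ ↦ log (1 + r ^ 2 - 2 * r * cos θ)
  have hg : IntervalIntegrable g volume 0 (2 * π) := by
    simp_rw [g, log_one_add_sq_sub_two_mul_cos]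
    exact (circleIntegrable_log_norm_sub_const (a := (r : ℂ)) (c := 0) 1).const_mul 2
  have hπ : π ∈ uIcc 0 (2 * π) := mem_uIcc_of_le pi_pos.le (by linarith [pi_pos])
  have hreflect : ∫ θ in π..2 * π, g θ = ∫ θ in 0..π, g θ := by
    have h := intervalIntegral.integral_comp_sub_left g (a := 0) (b := π) (2 * π)
    rw [show 2 * π - π = π by ring, sub_zero] at h
    simp only [← h, g, cos_two_pi_sub]
  have hsplit := intervalIntegral.integral_add_adjacent_intervals
    (hg.mono_set (uIcc_subset_uIcc left_mem_uIcc hπ))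
    (hg.mono_set (uIcc_subset_uIcc hπ right_mem_uIcc))
  rw [hreflect, integral_log_one_add_sq_sub_two_mul_cos_zero_two_pi] at hsplit
  linarith

theorem sqrt_four_mul_sub_sq_eq_two_mul_sqrt_mul_sin {c θ : ℝ} (hc : 0 ≤ c)
    (hθ : θ ∈ Icc 0 π) :
    √(4 * c - ((1 + c - 2 * √c * cos θ) - 1 - c) ^ 2) = 2 * √c * sin θ := by
  have hsin : 0 ≤ sin θ := sin_nonneg_of_nonneg_of_le_pi hθ.1 hθ.2
  rw [← sqrt_sq (by positivity : 0 ≤ 2 * √c * sin θ)]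
  congr 1
  nlinarith [sin_sq_add_cos_sq θ, sq_sqrt hc]

theorem integral_div_sqrt_four_mul_sub_sq_eq_integral_cos {c : ℝ} (hc : 0 < c) (g : ℝ → ℝ) :
    ∫ x in (1 - √c) ^ 2..(1 + √c) ^ 2, g x / √(4 * c - (x - 1 - c) ^ 2)
      = ∫ θ in 0..π, g (1 + c - 2 * √c * cos θ) := by
  set φ : ℝ → ℝ := fun θ ↦ 1 + c - 2 * √c * cos θ
  have hφ : ∀ θ, HasDerivAt φ (2 * √c * sin θ) θ := fun θ ↦ by
    simpa using ((hasDerivAt_cos θ).const_mul (2 * √c)).const_sub (1 + c)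
  have hsub := integral_Icc_deriv_smul_of_deriv_nonneg
    (g := fun x ↦ g x / √(4 * c - (x - 1 - c) ^ 2))
    (fun θ _ ↦ (hφ θ).continuousAt.continuousWithinAt) (fun θ _ ↦ hφ θ)
    (fun θ hθ ↦ by have := sin_pos_of_pos_of_lt_pi hθ.1 hθ.2; positivity) pi_pos.le
  have hφ0 : φ 0 = (1 - √c) ^ 2 := by simp only [φ, cos_zero]; nlinarith [sq_sqrt hc.le]
  have hφπ : φ π = (1 + √c) ^ 2 := by simp only [φ, cos_pi]; nlinarith [sq_sqrt hc.le]
  rw [hφ0, hφπ] at hsub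
  rw [intervalIntegral.integral_of_le (by nlinarith [sqrt_nonneg c]),
    intervalIntegral.integral_of_le pi_pos.le, ← integral_Icc_eq_integral_Ioc,
    ← integral_Icc_eq_integral_Ioc, ← hsub, integral_Icc_eq_integral_Ioo,
    integral_Icc_eq_integral_Ioo]
  refine setIntegral_congr_fun measurableSet_Ioo fun θ hθ ↦ ?_
  have hsin := sin_pos_of_pos_of_lt_pi hθ.1 hθ.2
  simp only [φ, smul_eq_mul,
    sqrt_four_mul_sub_sq_eq_two_mul_sqrt_mul_sin hc.le (Ioo_subset_Icc_self hθ)]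
  field_simp

theorem clt_mean_log (c : ℝ) (hc : c ∈ Set.Ioo (0:ℝ) 1) :
    let a := (1 - Real.sqrt c)^2
    let b := (1 + Real.sqrt c)^2
    (Real.log a + Real.log b) / 4
      - (1 / (2 * Real.pi)) * ∫ x in a..b,
          Real.log x / Real.sqrt (4 * c - (x - 1 - c)^2)
      = (1 / 2) * Real.log (1 - c) := by
  obtain ⟨hc0, hc1⟩ := hc
  intro a b
  have hr : log⁺ |√c| = 0 := (posLog_eq_zero_iff _).mpr <| by
    rw [abs_abs, abs_of_nonneg (sqrt_nonneg c)]
    exact Real.sqrt_le_one.mpr hc1.le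
  have hhalf := integral_log_one_add_sq_sub_two_mul_cos_zero_pi √c
  rw [sq_sqrt hc0.le, hr, mul_zero] at hhalf
  have hint : ∫ x in a..b, log x / √(4 * c - (x - 1 - c) ^ 2) = 0 :=
    (integral_div_sqrt_four_mul_sub_sq_eq_integral_cos hc0 log).trans hhalf
  have hab : a * b = (1 - c) ^ 2 := by
    show (1 - √c) ^ 2 * (1 + √c) ^ 2 = (1 - c) ^ 2
    linear_combination (√c ^ 2 + c - 2) * sq_sqrt hc0.le
  have hab0 : a * b ≠ 0 := hab ▸ pow_ne_zero 2 (sub_ne_zero.mpr hc1.ne')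
  rw [hint, mul_zero, sub_zero, ← log_mul (left_ne_zero_of_mul hab0) (right_ne_zero_of_mul hab0),
    hab, log_pow]
  push_cast
  ring
end

section
/- For $c \in (0,1)$ and any fixed $z_2$ on the circle $|\xi_2| = 1$ with $r > 1$, the contour integral $\frac{1}{2}\oint_{|\xi_1|=1} \log\big((1+\sqrt{c}\,\xi_1)^2\big)\Big(\frac{1}{(\xi_1 - r\xi_2)^2} + \frac{1}{(1 - r\xi_1\xi_2)^2}\Big) d\xi_1 = \frac{2 i \pi \sqrt{c}}{r\xi_2 (r\xi_2 + \sqrt{c})}$. -/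
/-!
On the closed unit disk `Re (1 + √c ξ) > 0`, so `(1 + √c ξ)²` stays off the branch cut and
`f ξ = log ((1 + √c ξ)²)` is holomorphic on a neighbourhood of it. With `w = r ξ₂`, the term
`f ξ / (ξ - w)²` has its pole outside the disk and integrates to zero, while
`1 / (1 - w ξ)² = w⁻² / (ξ - w⁻¹)²` turns the other term into the Cauchy formula for
`f' (w⁻¹) = 2 √c / (1 + √c w⁻¹)`.
-/

open Complex Metric Set
open scoped Real

theorem one_div_one_sub_mul_sq {K : Type*} [Field K] {w : K} (hw : w ≠ 0) (z : K) :
    1 / (1 - w * z) ^ 2 = w⁻¹ ^ 2 / (z - w⁻¹) ^ 2 := by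
  rw [show 1 - w * z = -w * (z - w⁻¹) by field_simp; ring]
  field_simp

namespace Complex

theorem sq_mem_slitPlane_of_re_pos {u : ℂ} (hu : 0 < u.re) : u ^ 2 ∈ slitPlane := by
  rw [mem_slitPlane_iff]
  by_cases him : u.im = 0
  · left
    simp [sq, him, hu]
  · right
    rw [sq, mul_im, mul_comm u.im, ← two_mul]
    exact mul_ne_zero two_ne_zero (mul_ne_zero hu.ne' him)

theorem circleIntegrable_div_sub_sq {c w : ℂ} {R : ℝ} (hR : 0 ≤ R) {f : ℂ → ℂ}
    (hf : ContinuousOn f (sphere c R)) (hw : w ∉ sphere c R) :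
    CircleIntegrable (fun z => f z / (z - w) ^ 2) c R :=
  ContinuousOn.circleIntegrable hR <| hf.div (by fun_prop) fun _z hz =>
    pow_ne_zero 2 (sub_ne_zero.2 (ne_of_mem_of_not_mem hz hw))

theorem circleIntegral_div_sub_sq_of_notMem_closedBall {c w : ℂ} {R : ℝ} (hR : 0 ≤ R)
    {f : ℂ → ℂ} (hf : DifferentiableOn ℂ f (closedBall c R)) (hw : w ∉ closedBall c R) :
    (∮ z in C(c, R), f z / (z - w) ^ 2) = 0 := by
  have hdiff : DifferentiableOn ℂ (fun z => f z / (z - w) ^ 2) (closedBall c R) := fun z hz =>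
    (hf z hz).div (by fun_prop) (pow_ne_zero 2 (sub_ne_zero.2 (ne_of_mem_of_not_mem hz hw)))
  exact (hdiff.diffContOnCl_ball subset_rfl).circleIntegral_eq_zero hR

theorem circleIntegral_div_sub_sq_of_mem_ball {U : Set ℂ} (hU : IsOpen U) {c a : ℂ} {R : ℝ}
    {f : ℂ → ℂ} (hRU : closedBall c R ⊆ U) (hf : DifferentiableOn ℂ f U) (ha : a ∈ ball c R) :
    (∮ z in C(c, R), f z / (z - a) ^ 2) = 2 * π * I * deriv f a := by
  have h := two_pi_I_inv_smul_circleIntegral_sub_sq_inv_smul_of_differentiable hU hRU hf ha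
  rw [inv_smul_eq_iff₀ (by simp [Real.pi_ne_zero])] at h
  simpa only [smul_eq_mul, div_eq_inv_mul] using h

theorem circleIntegral_mul_sq_pole_add_reflected_sq_pole {U : Set ℂ} (hU : IsOpen U) {R : ℝ}
    {f : ℂ → ℂ} {w : ℂ} (hRU : closedBall 0 R ⊆ U) (hf : DifferentiableOn ℂ f U)
    (hw : R < ‖w‖) (hw' : ‖w‖⁻¹ < R) :
    (∮ z in C(0, R), f z * (1 / (z - w) ^ 2 + 1 / (1 - w * z) ^ 2))
      = 2 * π * I * (w⁻¹ ^ 2 * deriv f w⁻¹) := by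
  have hR : 0 ≤ R := (inv_nonneg.2 (norm_nonneg w)).trans hw'.le
  have hw0 : w ≠ 0 := norm_pos_iff.1 (hR.trans_lt hw)
  have hw_out : w ∉ closedBall 0 R := by simpa using hw
  have hw_in : w⁻¹ ∈ ball 0 R := by simpa using hw'
  have hcont : ContinuousOn f (sphere 0 R) :=
    hf.continuousOn.mono (sphere_subset_closedBall.trans hRU)
  calc (∮ z in C(0, R), f z * (1 / (z - w) ^ 2 + 1 / (1 - w * z) ^ 2))
      = (∮ z in C(0, R), f z / (z - w) ^ 2)
          + w⁻¹ ^ 2 * ∮ z in C(0, R), f z / (z - w⁻¹) ^ 2 := by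
        have hint : CircleIntegrable (fun z => w⁻¹ ^ 2 * (f z / (z - w⁻¹) ^ 2)) 0 R :=
          (circleIntegrable_div_sub_sq hR hcont (by simpa using hw'.ne)).const_smul
        rw [← circleIntegral.integral_const_mul, ← circleIntegral.integral_add
          (circleIntegrable_div_sub_sq hR hcont (by simpa using hw.ne')) hint]
        congr 1 with z
        rw [one_div_one_sub_mul_sq hw0]
        ring
    _ = 2 * π * I * (w⁻¹ ^ 2 * deriv f w⁻¹) := by
        rw [circleIntegral_div_sub_sq_of_notMem_closedBall hR (hf.mono hRU) hw_out,
          circleIntegral_div_sub_sq_of_mem_ball hU hRU hf hw_in]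
        ring

theorem isOpen_setOf_re_one_add_mul_pos (s : ℂ) : IsOpen {z : ℂ | 0 < (1 + s * z).re} :=
  isOpen_lt continuous_const (by fun_prop)

theorem closedBall_subset_setOf_re_one_add_mul_pos {s : ℂ} (hs : ‖s‖ < 1) :
    closedBall 0 1 ⊆ {z : ℂ | 0 < (1 + s * z).re} := by
  intro z hz
  have hsz : ‖s * z‖ < 1 := by
    rw [norm_mul]
    exact mul_lt_one_of_nonneg_of_lt_one_left (norm_nonneg s) hs (mem_closedBall_zero_iff.1 hz)
  have hre := (abs_le.1 ((abs_re_le_norm (s * z)))).1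
  simp only [mem_ofPred_eq, add_re, one_re]
  linarith

theorem hasDerivAt_log_one_add_mul_sq {s z : ℂ} (hz : 0 < (1 + s * z).re) :
    HasDerivAt (fun z => log ((1 + s * z) ^ 2)) (2 * s / (1 + s * z)) z := by
  have hne : 1 + s * z ≠ 0 := fun h => hz.ne' (by simp [h])
  have hsq : HasDerivAt (fun z => (1 + s * z) ^ 2) (2 * (1 + s * z) * s) z := by
    simpa using (((hasDerivAt_id z).const_mul s).const_add 1).fun_pow 2
  convert hsq.clog (sq_mem_slitPlane_of_re_pos hz) using 1
  field_simp

end Complex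

theorem contour_log_integral (c : ℝ) (hc : c ∈ Set.Ioo (0:ℝ) 1)
    (r : ℝ) (hr : 1 < r) (ξ2 : ℂ) (hξ2 : ‖ξ2‖ = 1) :
    (1 / 2 : ℂ) *
        (∮ ξ in C(0, 1),
          Complex.log ((1 + (Real.sqrt c : ℂ) * ξ) ^ 2) *
            (1 / (ξ - (r : ℂ) * ξ2) ^ 2 + 1 / (1 - (r : ℂ) * ξ * ξ2) ^ 2))
      = 2 * Complex.I * Real.pi * (Real.sqrt c : ℂ) /
          ((r : ℂ) * ξ2 * ((r : ℂ) * ξ2 + (Real.sqrt c : ℂ))) := by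
  simp_rw [mul_right_comm (r : ℂ) _ ξ2]
  set s : ℂ := (Real.sqrt c : ℂ)
  set w : ℂ := (r : ℂ) * ξ2
  have hs : ‖s‖ < 1 := by
    rw [norm_real, Real.norm_of_nonneg (Real.sqrt_nonneg c), Real.sqrt_lt' one_pos, one_pow]
    exact hc.2
  have hw : ‖w‖ = r := by simp [w, hξ2, abs_of_pos (one_pos.trans hr)]
  have hdisk := closedBall_subset_setOf_re_one_add_mul_pos hs
  have hw_inv : 0 < (1 + s * w⁻¹).re :=
    hdisk (by simpa [hw] using (inv_lt_one_of_one_lt₀ hr).le)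
  rw [circleIntegral_mul_sq_pole_add_reflected_sq_pole (isOpen_setOf_re_one_add_mul_pos s) hdisk
    (fun z hz => (hasDerivAt_log_one_add_mul_sq hz).differentiableAt.differentiableWithinAt)
    (hw ▸ hr) (hw ▸ inv_lt_one_of_one_lt₀ hr), (hasDerivAt_log_one_add_mul_sq hw_inv).deriv]
  have hw0 : w ≠ 0 := norm_pos_iff.1 (hw ▸ one_pos.trans hr)
  field_simp
end
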